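/- arXiv:2205.04407 — 4 statements merged into one kernel-verified Lean document; each statement's English description precedes it below -/
import Mathlib

section
/- Let V be a finite-dimensional real vector space, γ a symmetric bilinear form on V with kernel spanned by a nonzero vector v⁰, and ξ : V → V a linear map with ξ v⁰ = 0 and γ(ξu, v) + γ(u, ξv) = 0 for all u, v. Let V₀ be the generalized eigenspace of ξ for eigenvalue 0 and U the sum of the generalized eigenspaces for nonzero (complex) eigenvalues, so V = V₀ ⊕ U. Then V₀ and U are γ-orthogonal, v⁰ ∈ V₀, and the restriction of γ to U is nondegenerate. -/
/-!
Skew-adjointness gives `γ (ξⁿ u) w = (-1)ⁿ γ u (ξⁿ w)`, so anything killed by a power of `ξ`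
is `γ`-orthogonal to anything in the image of that power: the Fitting components `V₀` and `U`
are orthogonal. Hence a vector of `U` orthogonal to `U` is orthogonal to `V₀ ⊕ U = V`, i.e. lies
in the kernel of `γ`; that kernel is spanned by `v⁰ ∈ ker ξ ⊆ V₀`, and `V₀ ∩ U = 0`.
-/

namespace Module.End

variable {R M : Type*} [CommRing R] [AddCommGroup M] [Module R M]

theorem mem_iSup_ker_pow_iff {f : Module.End R M} {u : M} :
    u ∈ ⨆ k : ℕ, LinearMap.ker (f ^ k) ↔ ∃ k : ℕ, (f ^ k) u = 0 :=
  Submodule.mem_iSup_of_directed _ f.iterateKer.monotone.directed_le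

end Module.End

namespace LinearMap.IsSkewAdjoint

variable {R M N : Type*} [CommRing R] [AddCommGroup M] [Module R M] [AddCommGroup N] [Module R N]
  {B : M →ₗ[R] M →ₗ[R] N} {f : Module.End R M}

theorem apply_pow_apply (h : B.IsSkewAdjoint f) (n : ℕ) (u v : M) :
    B ((f ^ n) u) v = (-1 : R) ^ n • B u ((f ^ n) v) := by
  induction n generalizing u with
  | zero => simp
  | succ n ih =>
    have hf : B (f u) = -B u ∘ₗ f := by ext v; simpa using h u v
    rw [pow_succ f, Module.End.mul_apply, ih, hf, pow_mul_comm', Module.End.mul_apply, pow_succ,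
      mul_smul]
    simp

theorem apply_eq_zero_of_mem_iSup_ker_pow_of_mem_iInf_range_pow (h : B.IsSkewAdjoint f)
    {u w : M} (hu : u ∈ ⨆ k : ℕ, LinearMap.ker (f ^ k))
    (hw : w ∈ ⨅ k : ℕ, LinearMap.range (f ^ k)) : B u w = 0 := by
  obtain ⟨n, hn⟩ := Module.End.mem_iSup_ker_pow_iff.mp hu
  obtain ⟨w, rfl⟩ := Submodule.mem_iInf _ |>.mp hw n
  have := h.apply_pow_apply n u w
  rwa [hn, map_zero, zero_apply, eq_comm, (isUnit_neg_one.pow n).smul_eq_zero] at this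

theorem apply_eq_zero_of_mem_iInf_range_pow_of_mem_iSup_ker_pow (h : B.IsSkewAdjoint f)
    {u w : M} (hu : u ∈ ⨆ k : ℕ, LinearMap.ker (f ^ k))
    (hw : w ∈ ⨅ k : ℕ, LinearMap.range (f ^ k)) : B w u = 0 := by
  obtain ⟨n, hn⟩ := Module.End.mem_iSup_ker_pow_iff.mp hu
  obtain ⟨w, rfl⟩ := Submodule.mem_iInf _ |>.mp hw n
  rw [h.apply_pow_apply, hn, map_zero, smul_zero]

theorem mem_ker_of_mem_iInf_range_pow [IsArtinian R M] [IsNoetherian R M] (h : B.IsSkewAdjoint f) {u : M}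
    (hu : u ∈ ⨅ k : ℕ, LinearMap.range (f ^ k))
    (hu_orth : ∀ w ∈ ⨅ k : ℕ, LinearMap.range (f ^ k), B u w = 0) : u ∈ LinearMap.ker B := by
  rw [LinearMap.mem_ker]
  ext z
  have hz : z ∈ (⨆ k : ℕ, LinearMap.ker (f ^ k)) ⊔ ⨅ k : ℕ, LinearMap.range (f ^ k) := by
    rw [f.isCompl_iSup_ker_pow_iInf_range_pow.sup_eq_top]
    exact Submodule.mem_top
  obtain ⟨z₀, hz₀, z₁, hz₁, rfl⟩ := Submodule.mem_sup.mp hz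
  rw [map_add, h.apply_eq_zero_of_mem_iInf_range_pow_of_mem_iSup_ker_pow hz₀ hu, hu_orth z₁ hz₁,
    add_zero, zero_apply]

end LinearMap.IsSkewAdjoint

theorem stmt_5_general (V : Type*) [AddCommGroup V] [Module ℝ V] [FiniteDimensional ℝ V]
    (γ : V →ₗ[ℝ] V →ₗ[ℝ] ℝ)
    (v0 : V)
    (hker : LinearMap.ker γ = Submodule.span ℝ {v0})
    (ξ : V →ₗ[ℝ] V) (hξv0 : ξ v0 = 0)
    (hskew : ∀ u v, γ (ξ u) v + γ u (ξ v) = 0) :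
    -- V₀ = generalized eigenspace for 0, U = intersection of ranges of powers
    IsCompl (⨆ k : ℕ, LinearMap.ker (ξ ^ k)) (⨅ k : ℕ, LinearMap.range (ξ ^ k)) ∧
    (∀ u ∈ (⨆ k : ℕ, LinearMap.ker (ξ ^ k)),
      ∀ w ∈ (⨅ k : ℕ, LinearMap.range (ξ ^ k)), γ u w = 0) ∧
    v0 ∈ (⨆ k : ℕ, LinearMap.ker (ξ ^ k)) ∧
    (∀ u ∈ (⨅ k : ℕ, LinearMap.range (ξ ^ k)),
      (∀ w ∈ (⨅ k : ℕ, LinearMap.range (ξ ^ k)), γ u w = 0) → u = 0) := by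
  have hξ : γ.IsSkewAdjoint ξ := fun u v ↦ by
    rw [Pi.neg_apply, map_neg, eq_neg_iff_add_eq_zero, hskew]
  have hcompl := ξ.isCompl_iSup_ker_pow_iInf_range_pow
  have hv0 : v0 ∈ ⨆ k : ℕ, LinearMap.ker (ξ ^ k) :=
    Submodule.mem_iSup_of_mem 1 (by rwa [pow_one, LinearMap.mem_ker])
  refine ⟨hcompl, fun u hu w hw ↦ hξ.apply_eq_zero_of_mem_iSup_ker_pow_of_mem_iInf_range_pow hu hw,
    hv0, fun u hu hu_orth ↦ ?_⟩
  have hu_ker := hξ.mem_ker_of_mem_iInf_range_pow hu hu_orth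
  rw [hker, Submodule.mem_span_singleton] at hu_ker
  obtain ⟨c, rfl⟩ := hu_ker
  exact Submodule.disjoint_def.mp hcompl.disjoint _ (Submodule.smul_mem _ c hv0) hu

theorem stmt_5 (V : Type*) [AddCommGroup V] [Module ℝ V] [FiniteDimensional ℝ V]
    (γ : V →ₗ[ℝ] V →ₗ[ℝ] ℝ) (hγsymm : ∀ u v, γ u v = γ v u)
    (v0 : V) (hv0 : v0 ≠ 0)
    (hker : LinearMap.ker γ = Submodule.span ℝ {v0})
    (ξ : V →ₗ[ℝ] V) (hξv0 : ξ v0 = 0)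
    (hskew : ∀ u v, γ (ξ u) v + γ u (ξ v) = 0) :
    -- V₀ = generalized eigenspace for 0, U = intersection of ranges of powers
    IsCompl (⨆ k : ℕ, LinearMap.ker (ξ ^ k)) (⨅ k : ℕ, LinearMap.range (ξ ^ k)) ∧
    (∀ u ∈ (⨆ k : ℕ, LinearMap.ker (ξ ^ k)),
      ∀ w ∈ (⨅ k : ℕ, LinearMap.range (ξ ^ k)), γ u w = 0) ∧
    v0 ∈ (⨆ k : ℕ, LinearMap.ker (ξ ^ k)) ∧
    (∀ u ∈ (⨅ k : ℕ, LinearMap.range (ξ ^ k)),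
      (∀ w ∈ (⨅ k : ℕ, LinearMap.range (ξ ^ k)), γ u w = 0) → u = 0) :=
  stmt_5_general V γ v0 hker ξ hξv0 hskew
end

section
/- Let V be finite-dimensional real, v⁰ ≠ 0, ξ linear with ξ v⁰ = 0, and suppose the special height of (V, ξ, v⁰) is h+1, i.e. there exists v ∈ V with ξ^{h+1} v = v⁰ and no v with ξ^{h+2} v = v⁰. Then the induced map ξ̄ on V̄ = V/span{v⁰} satisfies ξ̄ʰ v̄ ≠ 0 and ξ̄^{h+1} v̄ = 0 for v the witness; in particular ξ̄ has nilpotency height at least h on V̄ (Lemma 3). -/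
theorem stmt_9 (V : Type*) [AddCommGroup V] [Module ℝ V] [FiniteDimensional ℝ V]
    (ξ : V →ₗ[ℝ] V) (v0 : V) (hv0 : v0 ≠ 0) (hξv0 : ξ v0 = 0)
    (h : ℕ)
    -- the special height of (V, ξ, v⁰) is h + 1
    (hmem : ∃ v : V, (ξ ^ (h + 1)) v = v0)
    (hmax : ¬ ∃ v : V, (ξ ^ (h + 2)) v = v0) :
    ∃ ξb : (V ⧸ Submodule.span ℝ {v0}) →ₗ[ℝ] (V ⧸ Submodule.span ℝ {v0}),
      (∀ u : V, ξb (Submodule.Quotient.mk u) = Submodule.Quotient.mk (ξ u)) ∧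
      ∀ v : V, (ξ ^ (h + 1)) v = v0 →
        (ξb ^ h) (Submodule.Quotient.mk v) ≠ 0 ∧
        (ξb ^ (h + 1)) (Submodule.Quotient.mk v) = 0 := by
  set S := Submodule.span ℝ {v0} with hS
  have hle : S ≤ LinearMap.ker (S.mkQ ∘ₗ ξ) := by
    rw [Submodule.span_le]
    intro x hx
    simp only [Set.mem_singleton_iff] at hx
    subst hx
    simp [LinearMap.mem_ker, hξv0]
  refine ⟨S.liftQ (S.mkQ ∘ₗ ξ) hle, ?_, ?_⟩
  · intro u; rfl
  · have key : ∀ (k : ℕ) (u : V),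
      ((S.liftQ (S.mkQ ∘ₗ ξ) hle) ^ k) (Submodule.Quotient.mk u)
        = Submodule.Quotient.mk ((ξ ^ k) u) := by
      intro k
      induction k with
      | zero => intro u; rfl
      | succ n ih =>
        intro u
        rw [pow_succ, pow_succ]
        simp only [Module.End.mul_apply]
        have e : (S.liftQ (S.mkQ ∘ₗ ξ) hle) (Submodule.Quotient.mk u)
            = Submodule.Quotient.mk (ξ u) := rfl
        rw [e, ih]
    intro v hv
    constructor
    · rw [key]
      intro hc
      rw [Submodule.Quotient.mk_eq_zero, hS, Submodule.mem_span_singleton] at hc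
      obtain ⟨c, hc⟩ := hc
      have : (ξ ^ (h + 1)) v = 0 := by
        rw [pow_succ']
        simp only [Module.End.mul_apply]
        rw [← hc]  -- hc : c • v0 = ξ^h v
        simp [hξv0]
      rw [hv] at this
      exact hv0 this
    · rw [key, hv, Submodule.Quotient.mk_eq_zero]
      exact Submodule.mem_span_singleton_self v0
end

section
/- Let γ be a symmetric bilinear form on a real vector space V and N linear with γ(Nu,v) + γ(u,Nv) = 0. Suppose w ∈ V satisfies N^{h+1}w ∈ ker γ and γ(w, Nʰw) ≠ 0. Then the vectors w, Nw, …, Nʰw are linearly independent, and modulo ker γ they span a subspace on which γ induces a nondegenerate form (the Gram matrix of γ on {Nⁱw} has zero entries below the antidiagonal and nonzero entries γ(Nⁱw, N^{h−i}w) = (−1)ⁱ γ(w, Nʰw) on the antidiagonal). -/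
theorem stmt_11 (V : Type*) [AddCommGroup V] [Module ℝ V]
    (γ : V →ₗ[ℝ] V →ₗ[ℝ] ℝ) (hγsymm : ∀ u v, γ u v = γ v u)
    (N : V →ₗ[ℝ] V) (hskew : ∀ u v, γ (N u) v + γ u (N v) = 0)
    (w : V) (h : ℕ)
    -- N^{h+1} w lies in the kernel of γ
    (hkerw : ∀ x, γ ((N ^ (h + 1)) w) x = 0)
    (hnz : γ w ((N ^ h) w) ≠ 0) :
    LinearIndependent ℝ (fun i : Fin (h + 1) => (N ^ (i : ℕ)) w) ∧
    -- Gram matrix: zero entries below the antidiagonal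
    (∀ i j : ℕ, h + 1 ≤ i + j → γ ((N ^ i) w) ((N ^ j) w) = 0) ∧
    -- nonzero entries on the antidiagonal
    (∀ i : ℕ, i ≤ h →
      γ ((N ^ i) w) ((N ^ (h - i)) w) = (-1 : ℝ) ^ i * γ w ((N ^ h) w)) ∧
    -- γ is nondegenerate on the span of the chain
    (∀ u ∈ Submodule.span ℝ (Set.range fun i : Fin (h + 1) => (N ^ (i : ℕ)) w),
      (∀ x ∈ Submodule.span ℝ (Set.range fun i : Fin (h + 1) => (N ^ (i : ℕ)) w),
        γ u x = 0) → u = 0) := by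
  -- moving N across γ
  have hmove : ∀ (i : ℕ) (u v : V), γ ((N ^ i) u) v = (-1 : ℝ) ^ i * γ u ((N ^ i) v) := by
    intro i
    induction i with
    | zero => intro u v; simp
    | succ n ih =>
      intro u v
      have h1 : (N ^ (n + 1)) u = (N ^ n) (N u) := by rw [pow_succ]; rfl
      have h2 : (N ^ (n + 1)) v = N ((N ^ n) v) := by rw [pow_succ']; rfl
      have h3 : γ (N u) ((N ^ n) v) = - γ u (N ((N ^ n) v)) := by
        have := hskew u ((N ^ n) v); linarith
      rw [h1, ih (N u) v, h3, ← h2]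
      ring
  have hhigh : ∀ k : ℕ, h + 1 ≤ k → γ w ((N ^ k) w) = 0 := by
    intro k hk
    obtain ⟨m, rfl⟩ : ∃ m, k = m + (h + 1) := ⟨k - (h + 1), by omega⟩
    have hsplit : (N ^ (m + (h + 1))) w = (N ^ m) ((N ^ (h + 1)) w) := by
      rw [pow_add]; rfl
    rw [hγsymm, hsplit, hmove, hkerw, mul_zero]
  have hzero : ∀ i j : ℕ, h + 1 ≤ i + j → γ ((N ^ i) w) ((N ^ j) w) = 0 := by
    intro i j hij
    have hsplit : (N ^ i) ((N ^ j) w) = (N ^ (i + j)) w := by rw [pow_add]; rfl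
    rw [hmove, hsplit, hhigh _ hij, mul_zero]
  have hanti : ∀ i : ℕ, i ≤ h →
      γ ((N ^ i) w) ((N ^ (h - i)) w) = (-1 : ℝ) ^ i * γ w ((N ^ h) w) := by
    intro i hi
    have hsplit : (N ^ i) ((N ^ (h - i)) w) = (N ^ h) w := by
      rw [← Module.End.mul_apply, ← pow_add]
      congr 2
      omega
    rw [hmove, hsplit]
  -- key: triangularity forces coefficients to vanish
  have key : ∀ c : Fin (h + 1) → ℝ,
      (∀ k : Fin (h + 1), γ (∑ i, c i • (N ^ (i : ℕ)) w) ((N ^ (k : ℕ)) w) = 0) →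
      ∀ i, c i = 0 := by
    intro c hc
    suffices H : ∀ n : ℕ, ∀ i : Fin (h + 1), (i : ℕ) = n → c i = 0 by
      intro i; exact H i i rfl
    intro n
    induction n using Nat.strong_induction_on with
    | _ n ih =>
      intro i hi
      have hnh : n ≤ h := by have := i.isLt; omega
      have hk : h - n < h + 1 := by omega
      have hs := hc ⟨h - n, hk⟩
      simp only [map_sum, map_smul, LinearMap.sum_apply, LinearMap.smul_apply,
        smul_eq_mul] at hs
      rw [Finset.sum_eq_single i] at hs
      · rw [hi, hanti n hnh] at hs
        have h1 : ((-1 : ℝ) ^ n * γ w ((N ^ h) w)) ≠ 0 := by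
          exact mul_ne_zero (by positivity) hnz
        exact by
          rcases mul_eq_zero.mp hs with h' | h'
          · exact h'
          · exact absurd h' h1
      · intro j _ hj
        rcases lt_or_ge (j : ℕ) n with hlt | hle
        · rw [ih j hlt j rfl, zero_mul]
        · have hgt : n < (j : ℕ) := by
            rcases lt_or_eq_of_le hle with h' | h'
            · exact h'
            · exact absurd (Fin.ext (by omega)) hj
          rw [hzero _ _ (by omega), mul_zero]
      · intro hmem; exact absurd (Finset.mem_univ i) hmem
  have hli : LinearIndependent ℝ (fun i : Fin (h + 1) => (N ^ (i : ℕ)) w) := by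
    rw [Fintype.linearIndependent_iff]
    intro c hc
    apply key
    intro k
    rw [hc]
    simp
  refine ⟨hli, hzero, hanti, ?_⟩
  intro u hu hux
  rw [Submodule.mem_span_range_iff_exists_fun ℝ] at hu
  obtain ⟨c, rfl⟩ := hu
  have hcz : ∀ i, c i = 0 := by
    apply key
    intro k
    apply hux
    exact Submodule.subset_span ⟨k, rfl⟩
  simp [hcz]
end

section
/- Define the (2h+3)×(2h+3) real matrices: G with block form [[0,0,0],[0,0,I_{h+1}],[0,I_{h+1},0]] (first row and column zero, two off-diagonal identity blocks), and N with block form [[0, e_{h+1}ᵀ, 0],[0, J_{h+1}ᵀ, 0],[0, 0, −J_{h+1}]], where J_{h+1} is the (h+1)×(h+1) upper Jordan nilpotent block and e_{h+1} the last standard basis vector of ℝ^{h+1}. Then NᵀG + GN = 0, N e₀ = 0 (e₀ the first basis vector), N^{h+2} = 0, and N^{h+1} ≠ 0. -/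
open Matrix

/-- The m×m upper Jordan nilpotent block (1's on the superdiagonal). -/
def upperJordan (m : ℕ) : Matrix (Fin m) (Fin m) ℝ :=
  Matrix.of fun i j => if (i : ℕ) + 1 = (j : ℕ) then 1 else 0

/-- The Gram matrix [[0,0,0],[0,0,I],[0,I,0]] of item 3 of Theorem 5. -/
def G3 (h : ℕ) :
    Matrix (Unit ⊕ Fin (h + 1) ⊕ Fin (h + 1)) (Unit ⊕ Fin (h + 1) ⊕ Fin (h + 1)) ℝ :=
  Matrix.fromBlocks (0 : Matrix Unit Unit ℝ) 0 0
    (Matrix.fromBlocks 0 1 1 0)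

/-- The nilpotent matrix [[0, e_{h+1}ᵀ, 0],[0, J_{h+1}ᵀ, 0],[0, 0, −J_{h+1}]]
of item 3 of Theorem 5. -/
def N3 (h : ℕ) :
    Matrix (Unit ⊕ Fin (h + 1) ⊕ Fin (h + 1)) (Unit ⊕ Fin (h + 1) ⊕ Fin (h + 1)) ℝ :=
  Matrix.fromBlocks (0 : Matrix Unit Unit ℝ)
    (Matrix.of fun (_ : Unit) x =>
      Sum.elim (fun j : Fin (h + 1) => if j = Fin.last h then (1 : ℝ) else 0)
        (fun _ => (0 : ℝ)) x)
    0
    (Matrix.fromBlocks (upperJordan (h + 1))ᵀ 0 0 (-(upperJordan (h + 1))))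

/-- The top-right block of `N3`. -/
def B3 (h : ℕ) : Matrix Unit (Fin (h + 1) ⊕ Fin (h + 1)) ℝ :=
  Matrix.of fun (_ : Unit) x =>
    Sum.elim (fun j : Fin (h + 1) => if j = Fin.last h then (1 : ℝ) else 0)
      (fun _ => (0 : ℝ)) x

/-- The bottom-right block of `N3`. -/
def D3 (h : ℕ) : Matrix (Fin (h + 1) ⊕ Fin (h + 1)) (Fin (h + 1) ⊕ Fin (h + 1)) ℝ :=
  Matrix.fromBlocks (upperJordan (h + 1))ᵀ 0 0 (-(upperJordan (h + 1)))

lemma N3_eq (h : ℕ) : N3 h = Matrix.fromBlocks 0 (B3 h) 0 (D3 h) := rfl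

lemma upperJordan_pow (m k : ℕ) :
    (upperJordan m) ^ k =
      Matrix.of fun (i j : Fin m) => if (i : ℕ) + k = (j : ℕ) then (1 : ℝ) else 0 := by
  induction k with
  | zero =>
    ext i j
    simp [Matrix.one_apply, Fin.ext_iff, eq_comm]
  | succ k ih =>
    rw [pow_succ, ih]
    ext i j
    simp only [Matrix.mul_apply, Matrix.of_apply, upperJordan, ite_mul, one_mul, zero_mul]
    by_cases hik : (i : ℕ) + k < m
    · have : ∀ l : Fin m, ((i : ℕ) + k = (l : ℕ)) ↔ l = ⟨(i : ℕ) + k, hik⟩ := by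
        intro l; constructor
        · intro hl; exact Fin.ext hl.symm
        · intro hl; subst hl; rfl
      simp only [this]
      rw [Finset.sum_ite_eq' Finset.univ]
      simp [Nat.add_assoc]
    · have h1 : ∀ l : Fin m, ¬ ((i : ℕ) + k = (l : ℕ)) := by
        intro l hl
        exact hik (hl ▸ l.isLt)
      have h2 : ¬ ((i : ℕ) + (k + 1) = (j : ℕ)) := by
        intro hj
        apply hik
        omega
      simp [h1, h2]

lemma upperJordan_pow_self (m : ℕ) : (upperJordan m) ^ m = 0 := by
  rw [upperJordan_pow]
  ext i j
  have : ¬ ((i : ℕ) + m = (j : ℕ)) := by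
    have := j.isLt
    omega
  simp [this]

lemma D3_pow (h k : ℕ) :
    (D3 h) ^ k =
      Matrix.fromBlocks ((upperJordan (h + 1)) ^ k)ᵀ 0 0 ((-(upperJordan (h + 1))) ^ k) := by
  induction k with
  | zero => simp [Matrix.fromBlocks_one]
  | succ k ih =>
    rw [pow_succ, ih, D3, Matrix.fromBlocks_multiply]
    simp only [Matrix.mul_zero, Matrix.zero_mul, add_zero, zero_add]
    rw [← Matrix.transpose_mul, ← pow_succ', ← pow_succ]

lemma D3_pow_nilp (h : ℕ) : (D3 h) ^ (h + 1) = 0 := by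
  rw [D3_pow, upperJordan_pow_self, neg_pow, upperJordan_pow_self]
  simp

lemma sum_ite_pick {n : ℕ} (P : Fin n → Prop) [DecidablePred P] (i : Fin n) (c : ℝ) :
    (∑ x : Fin n, if P x then (if i = x then c else 0) else 0) = if P i then c else 0 := by
  have key : ∀ x : Fin n, (if P x then (if i = x then c else 0) else 0)
      = if i = x then (if P x then c else 0) else 0 := by
    intro x; by_cases hx : i = x <;> simp [hx]
  simp only [key]
  rw [Finset.sum_ite_eq]
  simp

lemma N3_pow (h k : ℕ) :
    (N3 h) ^ (k + 1) = Matrix.fromBlocks 0 (B3 h * (D3 h) ^ k) 0 ((D3 h) ^ (k + 1)) := by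
  induction k with
  | zero => simp [N3_eq]
  | succ k ih =>
    rw [pow_succ, ih, N3_eq, Matrix.fromBlocks_multiply]
    simp [Matrix.mul_assoc, ← pow_succ]

theorem stmt_15 (h : ℕ) :
    (N3 h)ᵀ * G3 h + G3 h * N3 h = 0 ∧
    (N3 h).mulVec (Pi.single (Sum.inl ()) 1) = 0 ∧
    (N3 h) ^ (h + 2) = 0 ∧
    (N3 h) ^ (h + 1) ≠ 0 := by
  refine ⟨?_, ?_, ?_, ?_⟩
  · ext i j
    rcases i with i | i | i <;> rcases j with j | j | j <;>
      simp [N3, G3, upperJordan, Matrix.mul_apply, Fintype.sum_sum_type,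
        Matrix.one_apply, Fin.val_eq_val, apply_ite] <;>
    (try (rw [sum_ite_pick]; split_ifs <;> ring))
  · rw [Matrix.mulVec_single]
    funext i
    rcases i with i | i
    · simp [N3]
    · rcases i with i | i <;> simp [N3]
  · have e : h + 2 = (h + 1) + 1 := rfl
    rw [e, N3_pow, D3_pow_nilp, pow_succ, D3_pow_nilp]
    simp
  · intro hcon
    rw [N3_pow h h] at hcon
    have h1 : (Matrix.fromBlocks (0 : Matrix Unit Unit ℝ) (B3 h * (D3 h) ^ h) 0
        ((D3 h) ^ (h + 1))) (Sum.inl ()) (Sum.inr (Sum.inl 0)) = 0 := by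
      rw [hcon]; rfl
    rw [Matrix.fromBlocks_apply₁₂] at h1
    rw [D3_pow] at h1
    have h2 : (B3 h * Matrix.fromBlocks ((upperJordan (h + 1)) ^ h)ᵀ 0 0
        ((-(upperJordan (h + 1))) ^ h)) () (Sum.inl 0) = 1 := by
      have hl : ∀ x : Fin (h + 1), ((x : ℕ) = h) ↔ x = Fin.last h := by
        intro x
        rw [Fin.ext_iff, Fin.val_last]
      simp [Matrix.mul_apply, Fintype.sum_sum_type, B3, upperJordan_pow, hl, eq_comm]
    rw [h1] at h2
    exact zero_ne_one h2
end
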